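/- There exist constants C > 0 and k ∈ ℕ such that for every integer T ≥ 2 and every real V > 0 there exists a randomized bidding policy π over T rounds (which may depend on V) such that for every sequence (v_t, m_t)_{t=1}^T ⊂ [0,1]^2 with Σ_{t=2}^T |m_t − m_{t−1}| ≤ V, the expected dynamic regret of π on this sequence is at most C · max{√(T·V), 1} · (1 + log T)^k; in particular, restarting a static-regret-optimal procedure with batch size of order √(T/V) achieves dynamic regret of order √(T·V) up to polylogarithmic factors when V is known. -/

import Mathlib

/-- First-price auction reward: `r(b; v, m) = (v - b) · 1[b ≥ m]`. -/
noncomputable def fpaReward (b v m : ℝ) : ℝ := if m ≤ b then v - b else 0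

/-- A randomized bidding policy over `T` rounds: a probability space together with,
for each round `t`, a measurable map from (history of `(vₛ, mₛ)` for `s < t`, current
value `vₜ`, randomness `ω`) to a bid in `[0,1]`. Rounds are indexed `0, …, T-1`. -/
structure BidPolicy (T : ℕ) where
  Ω : Type
  [instMS : MeasurableSpace Ω]
  μ : MeasureTheory.Measure Ω
  isProb : MeasureTheory.IsProbabilityMeasure μ
  bid : (t : ℕ) → (Fin t → ℝ × ℝ) → ℝ → Ω → ℝ
  bid_mem : ∀ t h v ω, bid t h v ω ∈ Set.Icc (0:ℝ) 1
  bid_measurable : ∀ t, Measurable fun p : (Fin t → ℝ × ℝ) × ℝ × Ω => bid t p.1 p.2.1 p.2.2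

attribute [instance] BidPolicy.instMS

/-- The bid of the policy at round `t` on the sequence `(v, m)`, given randomness `ω`. -/
noncomputable def BidPolicy.bids {T : ℕ} (π : BidPolicy T) (v m : ℕ → ℝ) (t : ℕ)
    (ω : π.Ω) : ℝ :=
  π.bid t (fun s : Fin t => (v s, m s)) (v t) ω

/-- Expected dynamic regret of a policy on the sequence `(v, m)` over `T` rounds. -/
noncomputable def BidPolicy.expRegret {T : ℕ} (π : BidPolicy T) (v m : ℕ → ℝ) : ℝ :=
  ∫ ω, (∑ t ∈ Finset.range T,
    (max (v t - m t) 0 - fpaReward (π.bids v m t ω) (v t) (m t))) ∂π.μ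

/-- Temporal variation `Σ_{t=2}^T |m_t - m_{t-1}|` (rounds indexed `0, …, T-1`). -/
noncomputable def totalVariation (m : ℕ → ℝ) (T : ℕ) : ℝ :=
  ∑ t ∈ Finset.range (T - 1), |m (t + 1) - m t|

/-- Number of switches `Σ_{t=2}^T 1[m_t ≠ m_{t-1}]` (rounds indexed `0, …, T-1`). -/
noncomputable def numSwitches (m : ℕ → ℝ) (T : ℕ) : ℝ :=
  ∑ t ∈ Finset.range (T - 1), if m (t + 1) ≠ m t then 1 else 0

/-!
With full feedback the bidder sees the previous highest competing bid `m'`. Bidding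
`min v (m' + ε)` loses at most `ε + |m - m'|` when it wins; when it loses although winning
was profitable, the competing bid must have jumped by more than `ε`, which costs at most
`1 ≤ |m - m'| / ε`. Summed over the rounds, the regret is at most `1 + T ε + S + S / ε`,
where the variation `S` is at most `min V T ≤ √(T V)`; the margin `ε = √(V / T)` balances
this to `1 + 3 √(T V)`.
-/

open MeasureTheory Finset

noncomputable def roundRegret (b v m : ℝ) : ℝ := max (v - m) 0 - fpaReward b v m

lemma roundRegret_le_one {b v m : ℝ} (hb : b ≤ v) (hv : v ≤ 1) (hm : 0 ≤ m) :
    roundRegret b v m ≤ 1 := by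
  unfold roundRegret fpaReward
  have : max (v - m) 0 ≤ 1 := max_le (by linarith) zero_le_one
  split_ifs <;> linarith

lemma roundRegret_min_add_le {v m m' ε : ℝ} (hε : 0 < ε) (hv : v ≤ 1) (hm : 0 ≤ m) :
    roundRegret (min v (m' + ε)) v m ≤ ε + |m - m'| + |m - m'| / ε := by
  have hd : m' - m ≤ |m - m'| := by rw [abs_sub_comm]; exact le_abs_self _
  have hdε : 0 ≤ |m - m'| / ε := by positivity
  unfold roundRegret fpaReward
  split_ifs with hwin
  · have := min_le_left v (m' + ε)
    have := min_le_right v (m' + ε)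
    rcases le_total m v with hmv | hvm
    · rw [max_eq_left (sub_nonneg.2 hmv)]; linarith
    · rw [max_eq_right (sub_nonpos.2 hvm)]; linarith
  · rcases le_total m v with hmv | hvm
    · -- losing a profitable round means `m > m' + ε`, i.e. `1 < |m - m'| / ε`
      have hjump : ε < |m - m'| := by
        have : m' + ε < m := by
          by_contra! h
          exact hwin (le_min hmv h)
        rw [abs_of_pos (by linarith)]; linarith
      have : 1 ≤ |m - m'| / ε := by rw [le_div_iff₀ hε]; linarith
      have : max (v - m) 0 ≤ 1 := max_le (by linarith) zero_le_one
      linarith [abs_nonneg (m - m')]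
    · rw [max_eq_right (sub_nonpos.2 hvm)]; linarith [abs_nonneg (m - m')]

lemma totalVariation_le_of_mem_Icc {m : ℕ → ℝ} {T : ℕ} (hm : ∀ t < T, m t ∈ Set.Icc (0:ℝ) 1) :
    totalVariation m T ≤ T := by
  calc totalVariation m T ≤ ∑ _t ∈ range (T - 1), (1 : ℝ) := by
        refine sum_le_sum fun t ht => ?_
        have ht := mem_range.1 ht
        obtain ⟨h0, h1⟩ := hm (t + 1) (by omega)
        obtain ⟨h0', h1'⟩ := hm t (by omega)
        exact abs_sub_le_of_nonneg_of_le h0 h1 h0' h1'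
    _ ≤ T := by simp

namespace BidPolicy

noncomputable def ofDeterministic (T : ℕ) (f : (t : ℕ) → (Fin t → ℝ × ℝ) → ℝ → ℝ)
    (hf_mem : ∀ t h v, f t h v ∈ Set.Icc (0:ℝ) 1)
    (hf_meas : ∀ t, Measurable fun p : (Fin t → ℝ × ℝ) × ℝ => f t p.1 p.2) : BidPolicy T where
  Ω := Unit
  μ := Measure.dirac ()
  isProb := inferInstance
  bid t h v _ := f t h v
  bid_mem t h v _ := hf_mem t h v
  bid_measurable t := (hf_meas t).comp (measurable_fst.prodMk (measurable_fst.comp measurable_snd))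

lemma expRegret_ofDeterministic {T : ℕ} {f : (t : ℕ) → (Fin t → ℝ × ℝ) → ℝ → ℝ}
    {hf_mem : ∀ t h v, f t h v ∈ Set.Icc (0:ℝ) 1}
    {hf_meas : ∀ t, Measurable fun p : (Fin t → ℝ × ℝ) × ℝ => f t p.1 p.2} (v m : ℕ → ℝ) :
    (ofDeterministic T f hf_mem hf_meas).expRegret v m =
      ∑ t ∈ range T, roundRegret (f t (fun s : Fin t => (v s, m s)) (v t)) (v t) (m t) :=
  integral_dirac _ ()

noncomputable def overbidPrevBid (ε : ℝ) : (t : ℕ) → (Fin t → ℝ × ℝ) → ℝ → ℝ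
  | 0, _, _ => 0
  | t + 1, h, v => max 0 (min 1 (min v ((h (Fin.last t)).2 + ε)))

lemma overbidPrevBid_mem (ε : ℝ) (t : ℕ) (h : Fin t → ℝ × ℝ) (v : ℝ) :
    overbidPrevBid ε t h v ∈ Set.Icc (0:ℝ) 1 := by
  cases t with
  | zero => simp [overbidPrevBid]
  | succ t => exact ⟨le_max_left _ _, max_le zero_le_one (min_le_left _ _)⟩

lemma measurable_overbidPrevBid (ε : ℝ) (t : ℕ) :
    Measurable fun p : (Fin t → ℝ × ℝ) × ℝ => overbidPrevBid ε t p.1 p.2 := by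
  cases t with
  | zero => exact measurable_const
  | succ t => simp only [overbidPrevBid]; fun_prop

noncomputable def overbidPrev (T : ℕ) (ε : ℝ) : BidPolicy T :=
  ofDeterministic T (overbidPrevBid ε) (overbidPrevBid_mem ε) (measurable_overbidPrevBid ε)

lemma expRegret_overbidPrev_le {T : ℕ} {ε : ℝ} (hε : 0 < ε) (hT : 1 ≤ T) {v m : ℕ → ℝ}
    (hv : ∀ t < T, v t ∈ Set.Icc (0:ℝ) 1) (hm : ∀ t < T, m t ∈ Set.Icc (0:ℝ) 1) :
    (overbidPrev T ε).expRegret v m ≤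
      1 + T * ε + totalVariation m T + totalVariation m T / ε := by
  rw [overbidPrev, expRegret_ofDeterministic, ← Nat.sub_add_cancel hT, sum_range_succ',
    Nat.sub_add_cancel hT]
  have hfirst : roundRegret (overbidPrevBid ε 0 (fun s : Fin 0 => (v s, m s)) (v 0)) (v 0) (m 0)
      ≤ 1 := roundRegret_le_one (hv 0 (by omega)).1 (hv 0 (by omega)).2 (hm 0 (by omega)).1
  have hlater : ∀ t ∈ range (T - 1),
      roundRegret (overbidPrevBid ε (t + 1) (fun s : Fin (t + 1) => (v s, m s)) (v (t + 1)))
        (v (t + 1)) (m (t + 1)) ≤ ε + |m (t + 1) - m t| + |m (t + 1) - m t| / ε := by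
    intro t ht
    have ht := mem_range.1 ht
    obtain ⟨hv0, hv1⟩ := hv (t + 1) (by omega)
    have hm0 := (hm t (by omega)).1
    have hbid : min (v (t + 1)) (m t + ε) ∈ Set.Icc (0:ℝ) 1 :=
      ⟨le_min hv0 (by linarith), (min_le_left _ _).trans hv1⟩
    simp only [overbidPrevBid, Fin.val_last, min_eq_right hbid.2, max_eq_right hbid.1]
    exact roundRegret_min_add_le hε hv1 (hm (t + 1) (by omega)).1
  have hTε : ((T - 1 : ℕ) : ℝ) * ε ≤ T * ε := by gcongr; exact_mod_cast Nat.sub_le T 1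
  calc _ ≤ ∑ t ∈ range (T - 1), (ε + |m (t + 1) - m t| + |m (t + 1) - m t| / ε) + 1 :=
        add_le_add (sum_le_sum hlater) hfirst
    _ = ((T - 1 : ℕ) : ℝ) * ε + totalVariation m T + totalVariation m T / ε + 1 := by
        simp [sum_add_distrib, sum_div, totalVariation]
    _ ≤ _ := by linarith

end BidPolicy

/-- Known-variation upper bound: for each known budget `V > 0` there is a policy
(e.g., restarting a static-regret-optimal procedure with batch size of order
`√(T/V)`) whose expected dynamic regret on every sequence in `[0,1]²` with temporal
variation at most `V` is `O(max {√(T·V), 1})` up to polylogarithmic factors in `T`. -/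
theorem known_variation_upper_bound :
    ∃ C : ℝ, 0 < C ∧ ∃ k : ℕ, ∀ T : ℕ, 2 ≤ T → ∀ V : ℝ, 0 < V →
      ∃ π : BidPolicy T,
        ∀ v m : ℕ → ℝ,
          (∀ t < T, v t ∈ Set.Icc (0:ℝ) 1) → (∀ t < T, m t ∈ Set.Icc (0:ℝ) 1) →
          totalVariation m T ≤ V →
          π.expRegret v m ≤
            C * max (Real.sqrt ((T : ℝ) * V)) 1 * (1 + Real.log T) ^ k := by
  refine ⟨4, by norm_num, 0, fun T hT V hV => ?_⟩
  have hT0 : (0:ℝ) < T := by positivity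
  set ε := √V / √T with hε_def
  have hε : 0 < ε := by positivity
  refine ⟨BidPolicy.overbidPrev T ε, fun v m hv hm hvar => ?_⟩
  have hsqrt : √(T * V) = √T * √V := Real.sqrt_mul hT0.le V
  have hTε : T * ε = √(T * V) := by
    rw [hsqrt, hε_def, mul_div_assoc', div_eq_iff (by positivity)]
    linear_combination -√V * Real.mul_self_sqrt hT0.le
  have hVε : V / ε = √(T * V) := by
    rw [hsqrt, hε_def, div_div_eq_mul_div, mul_comm, mul_div_assoc, Real.div_sqrt]
  have hvar' : totalVariation m T ≤ √(T * V) := by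
    refine Real.le_sqrt_of_sq_le ?_
    have := totalVariation_le_of_mem_Icc hm
    have : 0 ≤ totalVariation m T := sum_nonneg fun _ _ => abs_nonneg _
    nlinarith
  calc _ ≤ 1 + T * ε + totalVariation m T + totalVariation m T / ε :=
        BidPolicy.expRegret_overbidPrev_le hε (by omega) hv hm
    _ ≤ 1 + T * ε + √(T * V) + V / ε := by gcongr
    _ ≤ 4 * max √(T * V) 1 * (1 + Real.log T) ^ 0 := by
        rw [hTε, hVε, pow_zero, mul_one]
        linarith [le_max_left √(T * V) 1, le_max_right √(T * V) 1]
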